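/- For 1 < p < ∞ and μ ∈ [0,1], there is a constant c = c(n,p) > 0 such that for all ξ, η ∈ ℝⁿ with ξ ≠ η, c⁻¹ (μ² + |ξ|² + |η|²)^((p-2)/2) ≤ |V_p(ξ) - V_p(η)|² / |ξ - η|² ≤ c (μ² + |ξ|² + |η|²)^((p-2)/2). -/

import Mathlib

open MeasureTheory Metric

/-- The auxiliary map `V_p(ξ) = (μ² + |ξ|²)^((p-2)/4) ξ`. -/
noncomputable def Vp {n : ℕ} (p μ : ℝ) (ξ : EuclideanSpace ℝ (Fin n)) :
    EuclideanSpace ℝ (Fin n) :=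
  ((μ ^ 2 + ‖ξ‖ ^ 2) ^ ((p - 2) / 4)) • ξ

/-!
Write `V_p ξ = (f |ξ| / |ξ|) ξ` with the odd scalar profile `f t = (μ² + t²)^q t`, `q = (p - 2)/4 > -1/2`;
it is increasing, with `f' t ≍ (μ² + t²)^q`. For `|r| ≤ s` this gives `f s - f r ≍ (μ² + s²)^q (s - r)`:
by the mean value theorem when `r ≥ s/2` (then `μ² + θ² ≍ μ² + s²` on `[r, s]`), by comparison with
`f s - f (s/2)` when `0 ≤ r ≤ s/2`, and directly when `r ≤ 0`. Finally `|V_p ξ - V_p η|²` and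
`|ξ - η|²` are both affine in `⟪ξ, η⟫ ∈ [-|ξ||η|, |ξ||η|]`, and at the two endpoints they are the
one-dimensional quantities for `(|ξ|, ±|η|)`, so the comparison passes from `ℝ` to `ℝⁿ`.
-/

open Set

def Comparable (C a b : ℝ) : Prop := a ≤ C * b ∧ b ≤ C * a

namespace Comparable

variable {C C' a b c : ℝ}

theorem symm (h : Comparable C a b) : Comparable C b a := And.symm h

theorem zero : Comparable C 0 0 := by simp [Comparable]

theorem nonneg (h : Comparable C a b) (hC : 0 < C) (hb : 0 ≤ b) : 0 ≤ a :=
  nonneg_of_mul_nonneg_right (hb.trans h.2) hC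

theorem mono (h : Comparable C a b) (hCC' : C ≤ C') (ha : 0 ≤ a) (hb : 0 ≤ b) :
    Comparable C' a b :=
  ⟨h.1.trans (mul_le_mul_of_nonneg_right hCC' hb), h.2.trans (mul_le_mul_of_nonneg_right hCC' ha)⟩

theorem trans (hab : Comparable C a b) (hbc : Comparable C' b c) (hC : 0 ≤ C) (hC' : 0 ≤ C') :
    Comparable (C * C') a c := by
  constructor
  · calc a ≤ C * b := hab.1
      _ ≤ C * (C' * c) := mul_le_mul_of_nonneg_left hbc.1 hC
      _ = C * C' * c := by ring
  · calc c ≤ C' * b := hbc.2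
      _ ≤ C' * (C * a) := mul_le_mul_of_nonneg_left hab.2 hC'
      _ = C * C' * a := by ring

theorem mul_left (h : Comparable C a b) {d : ℝ} (hd : 0 ≤ d) : Comparable C (d * a) (d * b) :=
  ⟨(mul_le_mul_of_nonneg_left h.1 hd).trans_eq (mul_left_comm d C b),
    (mul_le_mul_of_nonneg_left h.2 hd).trans_eq (mul_left_comm d C a)⟩

theorem mul_right (h : Comparable C a b) {d : ℝ} (hd : 0 ≤ d) : Comparable C (a * d) (b * d) := by
  simpa only [mul_comm _ d] using h.mul_left hd

theorem sq (h : Comparable C a b) (ha : 0 ≤ a) (hb : 0 ≤ b) : Comparable (C ^ 2) (a ^ 2) (b ^ 2) :=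
  ⟨(pow_le_pow_left₀ ha h.1 2).trans_eq (mul_pow C b 2),
    (pow_le_pow_left₀ hb h.2 2).trans_eq (mul_pow C a 2)⟩

theorem div_right (h : Comparable C a (b * c)) (hc : 0 < c) : Comparable C (a / c) b := by
  constructor
  · rw [div_le_iff₀ hc, mul_assoc]; exact h.1
  · rw [mul_div_assoc', le_div_iff₀ hc]; exact h.2

theorem rpow_le (h : Comparable C a b) (ha : 0 < a) (hb : 0 < b) (e : ℝ) :
    a ^ e ≤ C ^ |e| * b ^ e := by
  have hC : 0 < C := pos_of_mul_pos_left (ha.trans_le h.1) hb.le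
  rcases le_or_gt 0 e with he | he
  · rw [abs_of_nonneg he, ← Real.mul_rpow hC.le hb.le]
    exact Real.rpow_le_rpow ha.le h.1 he
  · have hba : b / C ≤ a := by rw [div_le_iff₀ hC, mul_comm]; exact h.2
    calc a ^ e ≤ (b / C) ^ e := Real.rpow_le_rpow_of_nonpos (by positivity) hba he.le
      _ = C ^ |e| * b ^ e := by
        rw [abs_of_neg he, Real.div_rpow hb.le hC.le, Real.rpow_neg hC.le]
        ring

theorem rpow (h : Comparable C a b) (ha : 0 < a) (hb : 0 < b) (e : ℝ) :
    Comparable (C ^ |e|) (a ^ e) (b ^ e) :=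
  ⟨h.rpow_le ha hb e, h.symm.rpow_le hb ha e⟩

end Comparable

theorem one_le_max_inv_self {t : ℝ} (ht : 0 < t) : 1 ≤ max t t⁻¹ := by
  rcases le_total 1 t with h | h
  · exact h.trans (le_max_left _ _)
  · exact ((one_le_inv₀ ht).2 h).trans (le_max_right _ _)

theorem comparable_add_mul {u v t : ℝ} (hu : 0 ≤ u) (hv : 0 ≤ v) (ht : 0 < t) :
    Comparable (max t t⁻¹) (u + t * v) (u + v) := by
  have h₁ := one_le_max_inv_self ht
  have h₂ : 1 ≤ max t t⁻¹ * t :=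
    (inv_mul_cancel₀ ht.ne').symm.le.trans (mul_le_mul_of_nonneg_right (le_max_right _ _) ht.le)
  constructor <;> nlinarith [le_max_left t t⁻¹]

theorem add_mul_le_add_mul_of_mem_Icc {α β γ δ t₁ t₂ t : ℝ} (ht : t ∈ Icc t₁ t₂)
    (h₁ : α + β * t₁ ≤ γ + δ * t₁) (h₂ : α + β * t₂ ≤ γ + δ * t₂) : α + β * t ≤ γ + δ * t := by
  rcases le_total β δ with h | h <;> nlinarith [ht.1, ht.2]

noncomputable def vProfile (q μ t : ℝ) : ℝ := (μ ^ 2 + t ^ 2) ^ q * t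

noncomputable def vProfileDeriv (q μ t : ℝ) : ℝ :=
  (μ ^ 2 + t ^ 2) ^ (q - 1) * (μ ^ 2 + (1 + 2 * q) * t ^ 2)

section vProfile

variable {q μ r s t : ℝ}

theorem vProfile_neg : vProfile q μ (-t) = -vProfile q μ t := by
  simp [vProfile]

theorem vProfile_nonneg (ht : 0 ≤ t) : 0 ≤ vProfile q μ t := by
  unfold vProfile; positivity

theorem hasDerivAt_vProfile (ht : t ≠ 0) : HasDerivAt (vProfile q μ) (vProfileDeriv q μ t) t := by
  have hpos : 0 < μ ^ 2 + t ^ 2 := by positivity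
  have hbase : HasDerivAt (fun x => μ ^ 2 + x ^ 2) (2 * t) t := by
    simpa using (hasDerivAt_pow 2 t).const_add (μ ^ 2)
  have h : HasDerivAt (vProfile q μ)
      (2 * t * q * (μ ^ 2 + t ^ 2) ^ (q - 1) * t + (μ ^ 2 + t ^ 2) ^ q * 1) t :=
    (hbase.rpow_const (Or.inl hpos.ne')).mul (hasDerivAt_id' t)
  refine h.congr_deriv ?_
  rw [vProfileDeriv, Real.rpow_sub_one hpos.ne']
  field_simp
  ring

theorem vProfileDeriv_nonneg (hq : -(1 / 2) ≤ q) : 0 ≤ vProfileDeriv q μ t :=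
  mul_nonneg (Real.rpow_nonneg (by positivity) _)
    (add_nonneg (sq_nonneg μ) (mul_nonneg (by linarith) (sq_nonneg t)))

theorem vProfileDeriv_comparable (hq : -(1 / 2) < q) (ht : t ≠ 0) :
    Comparable (max (1 + 2 * q) (1 + 2 * q)⁻¹) (vProfileDeriv q μ t) ((μ ^ 2 + t ^ 2) ^ q) := by
  have hpos : 0 < μ ^ 2 + t ^ 2 := by positivity
  have hg : (μ ^ 2 + t ^ 2) ^ (q - 1) * (μ ^ 2 + t ^ 2) = (μ ^ 2 + t ^ 2) ^ q := by
    rw [← Real.rpow_add_one hpos.ne', sub_add_cancel]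
  have h := (comparable_add_mul (sq_nonneg μ) (sq_nonneg t) (by linarith : 0 < 1 + 2 * q)).mul_left
    (Real.rpow_nonneg hpos.le (q - 1))
  rwa [hg] at h

theorem exists_vProfile_sub_eq (hr : 0 < r) (hrs : r < s) :
    ∃ θ ∈ Ioo r s, vProfile q μ s - vProfile q μ r = vProfileDeriv q μ θ * (s - r) := by
  have hderiv : ∀ x ∈ Icc r s, HasDerivAt (vProfile q μ) (vProfileDeriv q μ x) x :=
    fun x hx => hasDerivAt_vProfile (hr.trans_le hx.1).ne'
  obtain ⟨θ, hθ, hslope⟩ := exists_hasDerivAt_eq_slope (vProfile q μ) (vProfileDeriv q μ) hrs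
    (fun x hx => (hderiv x hx).continuousAt.continuousWithinAt)
    (fun x hx => hderiv x (Ioo_subset_Icc_self hx))
  refine ⟨θ, hθ, ?_⟩
  rw [hslope, div_mul_cancel₀ _ (sub_ne_zero.2 hrs.ne')]

theorem vProfile_monotoneOn (hq : -(1 / 2) < q) : MonotoneOn (vProfile q μ) (Ici 0) := by
  intro r hr s _ hrs
  rcases (mem_Ici.1 hr).eq_or_lt with rfl | hr
  · simpa [vProfile] using vProfile_nonneg (q := q) (μ := μ) (hr.trans hrs)
  rcases hrs.eq_or_lt with rfl | hrs
  · rfl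
  obtain ⟨θ, -, hθ⟩ := exists_vProfile_sub_eq (q := q) (μ := μ) hr hrs
  nlinarith [vProfileDeriv_nonneg (μ := μ) (t := θ) hq.le]

theorem vProfile_sub_comparable_of_half_le (hq : -(1 / 2) < q) (hr : s / 2 ≤ r) (hrs : r ≤ s) :
    Comparable (max (1 + 2 * q) (1 + 2 * q)⁻¹ * 4 ^ |q|) (vProfile q μ s - vProfile q μ r)
      ((μ ^ 2 + s ^ 2) ^ q * (s - r)) := by
  rcases hrs.eq_or_lt with rfl | hrs
  · simpa using Comparable.zero
  obtain ⟨θ, ⟨hrθ, hθs⟩, hslope⟩ := exists_vProfile_sub_eq (q := q) (μ := μ) (by linarith) hrs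
  have hθ : 0 < θ := by linarith
  have hs : 0 < s := by linarith
  have hnear : Comparable 4 (μ ^ 2 + θ ^ 2) (μ ^ 2 + s ^ 2) :=
    ⟨by nlinarith, by nlinarith⟩
  have hK := one_le_max_inv_self (by linarith : 0 < 1 + 2 * q)
  rw [hslope]
  exact ((vProfileDeriv_comparable hq hθ.ne').trans (hnear.rpow (by positivity) (by positivity) q)
    (by linarith) (by positivity)).mul_right (by linarith)

theorem vProfile_sub_comparable (hq : -(1 / 2) < q) (hrs : |r| ≤ s) :
    Comparable (2 * (max (1 + 2 * q) (1 + 2 * q)⁻¹ * 4 ^ |q|)) (vProfile q μ s - vProfile q μ r)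
      ((μ ^ 2 + s ^ 2) ^ q * (s - r)) := by
  set K := max (1 + 2 * q) (1 + 2 * q)⁻¹ * 4 ^ |q|
  have hK : 1 ≤ K := one_le_mul_of_one_le_of_one_le (one_le_max_inv_self (by linarith))
    (Real.one_le_rpow (by norm_num) (abs_nonneg q))
  obtain ⟨hsr, hrs⟩ := abs_le.1 hrs
  have hs : 0 ≤ s := by linarith
  have ha : 0 ≤ (μ ^ 2 + s ^ 2) ^ q := Real.rpow_nonneg (by positivity) q
  have hfs : vProfile q μ s = (μ ^ 2 + s ^ 2) ^ q * s := rfl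
  have hmono := vProfile_monotoneOn (μ := μ) hq
  rcases lt_or_ge r 0 with hr | hr
  · have h₁ : vProfile q μ (-r) ≤ vProfile q μ s := hmono (by simp; linarith) hs (by linarith)
    have h₂ : 0 ≤ vProfile q μ (-r) := vProfile_nonneg (by linarith)
    rw [vProfile_neg] at h₁ h₂
    have h : Comparable 2 (vProfile q μ s - vProfile q μ r) ((μ ^ 2 + s ^ 2) ^ q * (s - r)) :=
      ⟨by nlinarith, by nlinarith⟩
    exact h.mono (by linarith) (by linarith) (mul_nonneg ha (by linarith))
  rcases le_or_gt (s / 2) r with hr' | hr'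
  · exact (vProfile_sub_comparable_of_half_le hq hr' hrs).mono (by linarith)
      (sub_nonneg.2 (hmono hr hs hrs)) (mul_nonneg ha (by linarith))
  have hmid := vProfile_sub_comparable_of_half_le (μ := μ) hq le_rfl (half_le_self hs)
  have h₁ : vProfile q μ r ≤ vProfile q μ (s / 2) := hmono hr (by simp; linarith) hr'.le
  have h₂ : 0 ≤ vProfile q μ r := vProfile_nonneg hr
  have hsr' : 0 ≤ (μ ^ 2 + s ^ 2) ^ q * (s - r) := mul_nonneg ha (by linarith)
  constructor
  · calc vProfile q μ s - vProfile q μ r ≤ (μ ^ 2 + s ^ 2) ^ q * s := by linarith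
      _ ≤ 2 * ((μ ^ 2 + s ^ 2) ^ q * (s - r)) := by nlinarith [mul_nonneg ha hr]
      _ ≤ 2 * K * ((μ ^ 2 + s ^ 2) ^ q * (s - r)) := by nlinarith
  · calc (μ ^ 2 + s ^ 2) ^ q * (s - r) ≤ 2 * ((μ ^ 2 + s ^ 2) ^ q * (s - s / 2)) := by
          nlinarith [mul_nonneg ha hr]
      _ ≤ 2 * (K * (vProfile q μ s - vProfile q μ (s / 2))) := by linarith [hmid.2]
      _ ≤ 2 * K * (vProfile q μ s - vProfile q μ r) := by nlinarith

theorem exists_vProfile_sub_sq_comparable (hq : -(1 / 2) < q) :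
    ∃ C > 0, ∀ μ s r : ℝ, |r| ≤ s → Comparable C ((vProfile q μ s - vProfile q μ r) ^ 2)
      ((μ ^ 2 + s ^ 2 + r ^ 2) ^ (2 * q) * (s - r) ^ 2) := by
  set K := 2 * (max (1 + 2 * q) (1 + 2 * q)⁻¹ * 4 ^ |q|)
  have hK : 0 < K := mul_pos two_pos (mul_pos
    (zero_lt_one.trans_le (one_le_max_inv_self (by linarith))) (by positivity))
  refine ⟨(K * 2 ^ |q|) ^ 2, by positivity, fun μ s r hrs => ?_⟩
  rcases ((abs_nonneg r).trans hrs).eq_or_lt with rfl | hs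
  · obtain rfl : r = 0 := abs_nonpos_iff.1 hrs
    simpa using Comparable.zero
  have hr2 : r ^ 2 ≤ s ^ 2 := sq_le_sq' (abs_le.1 hrs).1 (abs_le.1 hrs).2
  have hsr : 0 ≤ s - r := by linarith [le_abs_self r]
  have hA : Comparable 2 (μ ^ 2 + s ^ 2) (μ ^ 2 + s ^ 2 + r ^ 2) :=
    ⟨by nlinarith, by nlinarith⟩
  have h := (vProfile_sub_comparable (μ := μ) hq hrs).trans
    ((hA.rpow (by positivity) (by positivity) q).mul_right hsr) hK.le (by positivity)
  have h₀ : 0 ≤ vProfile q μ s - vProfile q μ r := h.nonneg (by positivity) (by positivity)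
  have hsq := h.sq h₀ (by positivity)
  rwa [mul_pow ((μ ^ 2 + s ^ 2 + r ^ 2) ^ q), ← Real.rpow_mul_natCast (by positivity), Nat.cast_ofNat,
    mul_comm q] at hsq

end vProfile

theorem comparable_norm_smul_sub_smul_sq {E : Type*} [NormedAddCommGroup E]
    [InnerProductSpace ℝ E] {C W a b : ℝ} {x y : E}
    (h₁ : Comparable C ((a * ‖x‖ - b * ‖y‖) ^ 2) (W * (‖x‖ - ‖y‖) ^ 2))
    (h₂ : Comparable C ((a * ‖x‖ + b * ‖y‖) ^ 2) (W * (‖x‖ + ‖y‖) ^ 2)) :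
    Comparable C (‖a • x - b • y‖ ^ 2) (W * ‖x - y‖ ^ 2) := by
  have hN : ‖a • x - b • y‖ ^ 2 = a ^ 2 * ‖x‖ ^ 2 + b ^ 2 * ‖y‖ ^ 2 - 2 * (a * b) * inner ℝ x y := by
    rw [norm_sub_sq_real, norm_smul, norm_smul, real_inner_smul_left, real_inner_smul_right,
      mul_pow, mul_pow, Real.norm_eq_abs, Real.norm_eq_abs, sq_abs, sq_abs]
    ring
  have hD : ‖x - y‖ ^ 2 = ‖x‖ ^ 2 + ‖y‖ ^ 2 - 2 * inner ℝ x y := by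
    rw [norm_sub_sq_real]; ring
  have ht : inner ℝ x y ∈ Icc (-(‖x‖ * ‖y‖)) (‖x‖ * ‖y‖) := abs_le.1 (abs_real_inner_le_norm x y)
  rw [hN, hD]
  constructor
  · have := add_mul_le_add_mul_of_mem_Icc (α := a ^ 2 * ‖x‖ ^ 2 + b ^ 2 * ‖y‖ ^ 2)
      (β := -2 * (a * b)) (γ := C * W * (‖x‖ ^ 2 + ‖y‖ ^ 2)) (δ := -2 * (C * W)) ht
      (by linear_combination h₂.1) (by linear_combination h₁.1)
    linear_combination this
  · have := add_mul_le_add_mul_of_mem_Icc (α := W * (‖x‖ ^ 2 + ‖y‖ ^ 2)) (β := -2 * W)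
      (γ := C * (a ^ 2 * ‖x‖ ^ 2 + b ^ 2 * ‖y‖ ^ 2)) (δ := -2 * (C * (a * b))) ht
      (by linear_combination h₂.2) (by linear_combination h₁.2)
    linear_combination this

theorem exists_Vp_comparable {p : ℝ} (hp : 0 < p) :
    ∃ C > 0, ∀ (n : ℕ) (μ : ℝ) (ξ η : EuclideanSpace ℝ (Fin n)),
      Comparable C (‖Vp p μ ξ - Vp p μ η‖ ^ 2)
        ((μ ^ 2 + ‖ξ‖ ^ 2 + ‖η‖ ^ 2) ^ ((p - 2) / 2) * ‖ξ - η‖ ^ 2) := by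
  obtain ⟨C, hC, h⟩ := exists_vProfile_sub_sq_comparable (q := (p - 2) / 4) (by linarith)
  refine ⟨C, hC, fun n μ ξ η => ?_⟩
  wlog hle : ‖η‖ ≤ ‖ξ‖ generalizing ξ η
  · have := this η ξ (le_of_not_ge hle)
    rwa [norm_sub_rev, norm_sub_rev η, add_right_comm] at this
  have hexp : 2 * ((p - 2) / 4) = (p - 2) / 2 := by ring
  have h₁ := h μ ‖ξ‖ ‖η‖ (by rwa [abs_norm])
  have h₂ := h μ ‖ξ‖ (-‖η‖) (by rwa [abs_neg, abs_norm])
  rw [vProfile_neg, sub_neg_eq_add, neg_sq, sub_neg_eq_add] at h₂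
  rw [hexp] at h₁ h₂
  exact comparable_norm_smul_sub_smul_sq h₁ h₂

/-- Lemma 2.1: for `1 < p < ∞` and `μ ∈ [0,1]` there is `c = c(n,p) > 0` such that
`c⁻¹ (μ²+|ξ|²+|η|²)^((p-2)/2) ≤ |V_p ξ - V_p η|²/|ξ-η|² ≤ c (μ²+|ξ|²+|η|²)^((p-2)/2)`. -/
theorem stmt0 (n : ℕ) (p : ℝ) (hp : 1 < p) :
    ∃ c > (0 : ℝ), ∀ μ : ℝ, 0 ≤ μ → μ ≤ 1 →
      ∀ ξ η : EuclideanSpace ℝ (Fin n), ξ ≠ η →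
        c⁻¹ * (μ ^ 2 + ‖ξ‖ ^ 2 + ‖η‖ ^ 2) ^ ((p - 2) / 2) ≤
            ‖Vp p μ ξ - Vp p μ η‖ ^ 2 / ‖ξ - η‖ ^ 2 ∧
          ‖Vp p μ ξ - Vp p μ η‖ ^ 2 / ‖ξ - η‖ ^ 2 ≤
            c * (μ ^ 2 + ‖ξ‖ ^ 2 + ‖η‖ ^ 2) ^ ((p - 2) / 2) := by
  obtain ⟨C, hC, h⟩ := exists_Vp_comparable (by linarith : 0 < p)
  refine ⟨C, hC, fun μ _ _ ξ η hne => ?_⟩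
  have hD : 0 < ‖ξ - η‖ ^ 2 := pow_pos (norm_pos_iff.2 (sub_ne_zero.2 hne)) 2
  obtain ⟨hupper, hlower⟩ := (h n μ ξ η).div_right hD
  exact ⟨(inv_mul_le_iff₀ hC).2 hlower, hupper⟩
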